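/- Let μ ⊇ (j−m−1) be a partition of j−1 with first part μ₁ = j−m−1+t for some 0 ≤ t ≤ m, and let n ≥ j, k ≥ m with k−(n−j) ≤ m. Define μ' = (μ₁+n−j, μ₂,…,μ_s), a partition of n−1 with first part ≥ n−k−1. Then the number of standard skew tableaux of shape μ/(j−m−1) is at most the number of standard skew tableaux of shape μ'/(n−k−1). -/

import Mathlib

/-- The cells of the skew diagram `lam / (r)`: the diagram of `lam` (a list of row
lengths) with the first `r` boxes of the first row removed. -/
def skewCells (lam : List ℕ) (r : ℕ) : Set (ℕ × ℕ) :=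
  {c | c.2 < lam.getD c.1 0 ∧ (c.1 = 0 → r ≤ c.2)}

/-- `f` is a standard skew tableau of shape `lam / (r)`. -/
def IsStdSkew (lam : List ℕ) (r : ℕ) (f : ℕ × ℕ → ℕ) : Prop :=
  (∀ c, c ∉ skewCells lam r → f c = 0) ∧
  Set.BijOn f (skewCells lam r) (Set.Icc 1 (lam.sum - r)) ∧
  (∀ c ∈ skewCells lam r, ∀ c' ∈ skewCells lam r,
    ((c.1 = c'.1 ∧ c.2 < c'.2) ∨ (c.2 = c'.2 ∧ c.1 < c'.1)) → f c < f c')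

/-- `d_{lam/(r)}`: the number of standard skew tableaux of shape `lam / (r)`. -/
noncomputable def numStdSkew (lam : List ℕ) (r : ℕ) : ℕ :=
  Nat.card {f : ℕ × ℕ → ℕ // IsStdSkew lam r f}

/-!
A standard tableau of `μ/(j−m−1)` becomes one of `μ'/(n−k−1)` in two injective steps. First the
boxes of the first row move `(n−k−1) − (j−m−1)` columns to the right, keeping their entries: each
entry is still smaller than the entries below its new column, since those are at least the
entries below its old column. Then the first row is lengthened one box at a time, each new box
getting the next entry; no box lies below a new one, because the lower rows are no longer than
the first.
-/

lemma mem_skewCells_cons_zero {a r c : ℕ} {l : List ℕ} :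
    (0, c) ∈ skewCells (a :: l) r ↔ r ≤ c ∧ c < a := by
  simp [skewCells, and_comm]

lemma mem_skewCells_cons_succ {a r i c : ℕ} {l : List ℕ} :
    (i + 1, c) ∈ skewCells (a :: l) r ↔ c < l.getD i 0 := by
  simp [skewCells]

lemma getD_le_of_forall_le {l : List ℕ} {a : ℕ} (hl : ∀ x ∈ l, x ≤ a) (i : ℕ) :
    l.getD i 0 ≤ a := by
  rcases lt_or_ge i l.length with hi | hi
  · rw [List.getD_eq_getElem l 0 hi]
    exact hl _ (List.getElem_mem hi)
  · rw [List.getD_eq_default l 0 hi]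
    exact Nat.zero_le a

lemma skewCells_finite (lam : List ℕ) (r : ℕ) : (skewCells lam r).Finite := by
  refine ((Set.finite_Iio lam.length).prod (Set.finite_Iio lam.sum)).subset ?_
  rintro ⟨i, c⟩ ⟨hc, -⟩
  have hi : i < lam.length := by
    by_contra hi
    rw [List.getD_eq_default lam 0 (by omega)] at hc
    omega
  rw [List.getD_eq_getElem lam 0 hi] at hc
  exact ⟨hi, hc.trans_le (List.le_sum_of_mem (List.getElem_mem hi))⟩

namespace IsStdSkew

variable {lam : List ℕ} {r : ℕ} {f : ℕ × ℕ → ℕ}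

lemma ext {g : ℕ × ℕ → ℕ} (hf : IsStdSkew lam r f) (hg : IsStdSkew lam r g)
    (h : Set.EqOn f g (skewCells lam r)) : f = g := by
  funext c
  by_cases hc : c ∈ skewCells lam r
  · exact h hc
  · rw [hf.1 c hc, hg.1 c hc]

lemma row_lt (hf : IsStdSkew lam r f) {i c c' : ℕ} (hc : (i, c) ∈ skewCells lam r)
    (hc' : (i, c') ∈ skewCells lam r) (h : c < c') : f (i, c) < f (i, c') :=
  hf.2.2 _ hc _ hc' (.inl ⟨rfl, h⟩)

lemma row_le (hf : IsStdSkew lam r f) {i c c' : ℕ} (hc : (i, c) ∈ skewCells lam r)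
    (hc' : (i, c') ∈ skewCells lam r) (h : c ≤ c') : f (i, c) ≤ f (i, c') := by
  rcases h.eq_or_lt with rfl | h
  · rfl
  · exact (hf.row_lt hc hc' h).le

lemma col_lt (hf : IsStdSkew lam r f) {i i' c : ℕ} (hc : (i, c) ∈ skewCells lam r)
    (hc' : (i', c) ∈ skewCells lam r) (h : i < i') : f (i, c) < f (i', c) :=
  hf.2.2 _ hc _ hc' (.inr ⟨rfl, h⟩)

lemma le_size (hf : IsStdSkew lam r f) {c : ℕ × ℕ} (hc : c ∈ skewCells lam r) :
    f c ≤ lam.sum - r :=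
  (hf.2.1.mapsTo hc).2

end IsStdSkew

instance IsStdSkew.finite (lam : List ℕ) (r : ℕ) :
    Finite {f : ℕ × ℕ → ℕ // IsStdSkew lam r f} := by
  have := (skewCells_finite lam r).to_subtype
  refine Finite.of_injective
    (fun f (c : skewCells lam r) => (⟨f.1 c, f.2.2.1.mapsTo c.2⟩ : Set.Icc 1 (lam.sum - r)))
    fun f g h => ?_
  exact Subtype.ext <| f.2.ext g.2 fun c hc => congrArg Subtype.val (congrFun h ⟨c, hc⟩)

lemma numStdSkew_le_of_map {lam lam' : List ℕ} {r r' : ℕ} (F : (ℕ × ℕ → ℕ) → ℕ × ℕ → ℕ)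
    (hF : ∀ f, IsStdSkew lam r f → IsStdSkew lam' r' (F f))
    (hinj : ∀ f g, IsStdSkew lam r f → IsStdSkew lam r g → F f = F g → f = g) :
    numStdSkew lam r ≤ numStdSkew lam' r' :=
  Nat.card_le_card_of_injective (fun f => ⟨F f.1, hF f.1 f.2⟩) fun f g h =>
    Subtype.ext <| hinj f.1 g.1 f.2 g.2 (congrArg Subtype.val h)

lemma IsStdSkew.indicator_comp {lam lam' : List ℕ} {r r' : ℕ} {f : ℕ × ℕ → ℕ}
    {σ : ℕ × ℕ → ℕ × ℕ} (hf : IsStdSkew lam r f)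
    (hσ : Set.BijOn σ (skewCells lam' r') (skewCells lam r)) (hsize : lam'.sum - r' = lam.sum - r)
    (hlt : ∀ c ∈ skewCells lam' r', ∀ c' ∈ skewCells lam' r',
      ((c.1 = c'.1 ∧ c.2 < c'.2) ∨ (c.2 = c'.2 ∧ c.1 < c'.1)) → f (σ c) < f (σ c')) :
    IsStdSkew lam' r' ((skewCells lam' r').indicator (f ∘ σ)) := by
  refine ⟨fun c hc => Set.indicator_of_notMem hc _, ?_, fun c hc c' hc' h => ?_⟩
  · rw [hsize]
    exact (hf.2.1.comp hσ).congr fun c hc => (Set.indicator_of_mem hc _).symm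
  · rw [Set.indicator_of_mem hc, Set.indicator_of_mem hc']
    exact hlt c hc c' hc' h

def shiftFirstRow (d : ℕ) (c : ℕ × ℕ) : ℕ × ℕ :=
  if c.1 = 0 then (0, c.2 - d) else c

@[simp] lemma shiftFirstRow_zero (d c : ℕ) : shiftFirstRow d (0, c) = (0, c - d) := rfl

@[simp] lemma shiftFirstRow_succ (d i c : ℕ) : shiftFirstRow d (i + 1, c) = (i + 1, c) := rfl

lemma bijOn_shiftFirstRow (a d r : ℕ) (l : List ℕ) :
    Set.BijOn (shiftFirstRow d) (skewCells ((a + d) :: l) (r + d)) (skewCells (a :: l) r) := by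
  refine ⟨?_, ?_, ?_⟩
  · rintro ⟨_ | i, c⟩ hc <;> simp_all [mem_skewCells_cons_zero, mem_skewCells_cons_succ]
    omega
  · rintro ⟨_ | i, c⟩ hc ⟨_ | i', c'⟩ hc' h <;>
      simp_all [mem_skewCells_cons_zero, mem_skewCells_cons_succ]
    omega
  · rintro ⟨_ | i, c⟩ hc
    · refine ⟨(0, c + d), ?_, by simp [shiftFirstRow]⟩
      rw [mem_skewCells_cons_zero] at hc ⊢
      omega
    · exact ⟨(i + 1, c), by simpa [mem_skewCells_cons_succ] using hc, rfl⟩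

lemma IsStdSkew.shiftFirstRow {a d r : ℕ} {l : List ℕ} {f : ℕ × ℕ → ℕ}
    (hf : IsStdSkew (a :: l) r f) :
    IsStdSkew ((a + d) :: l) (r + d)
      ((skewCells ((a + d) :: l) (r + d)).indicator (f ∘ shiftFirstRow d)) := by
  have hσ := bijOn_shiftFirstRow a d r l
  refine hf.indicator_comp hσ (by simp; omega) ?_
  intro c hc c' hc' h
  have hσc := hσ.mapsTo hc
  have hσc' := hσ.mapsTo hc'
  rcases c with ⟨_ | i, c⟩ <;> rcases c' with ⟨_ | i', c'⟩ <;>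
    simp only [shiftFirstRow_zero, shiftFirstRow_succ] at hσc hσc' h ⊢
  · rw [mem_skewCells_cons_zero] at hc hc'
    exact hf.row_lt hσc hσc' (by omega)
  · obtain rfl : c = c' := by omega
    have hbelow : (i' + 1, c - d) ∈ skewCells (a :: l) r := by
      rw [mem_skewCells_cons_succ] at hσc' ⊢
      omega
    calc f (0, c - d) < f (i' + 1, c - d) := hf.col_lt hσc hbelow i'.succ_pos
      _ ≤ f (i' + 1, c) := hf.row_le hbelow hσc' (c.sub_le d)
  · omega
  · exact hf.2.2 _ hσc _ hσc' h

lemma skewCells_succ_head {a r : ℕ} (l : List ℕ) (hr : r ≤ a) :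
    skewCells ((a + 1) :: l) r = insert (0, a) (skewCells (a :: l) r) := by
  ext ⟨_ | i, c⟩ <;> simp [mem_skewCells_cons_zero, mem_skewCells_cons_succ]
  omega

lemma IsStdSkew.update_succ_head {a r : ℕ} {l : List ℕ} {f : ℕ × ℕ → ℕ}
    (hf : IsStdSkew (a :: l) r f) (hr : r ≤ a) (hl : ∀ x ∈ l, x ≤ a) :
    IsStdSkew ((a + 1) :: l) r (Function.update f (0, a) ((a :: l).sum - r + 1)) := by
  set N := (a :: l).sum - r
  have hnew : (0, a) ∉ skewCells (a :: l) r := by simp [mem_skewCells_cons_zero]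
  have hsize : ((a + 1) :: l).sum - r = N + 1 := by simp [N]; omega
  unfold IsStdSkew
  rw [skewCells_succ_head l hr]
  refine ⟨fun c hc => ?_, ?_, ?_⟩
  · rw [Set.mem_insert_iff, not_or] at hc
    rw [Function.update_of_ne hc.1, hf.1 c hc.2]
  · have hold : Set.BijOn (Function.update f (0, a) (N + 1)) (skewCells (a :: l) r)
        (Set.Icc 1 N) :=
      hf.2.1.congr fun c hc => (Function.update_of_ne (ne_of_mem_of_not_mem hc hnew) _ _).symm
    have hIcc : Set.Icc 1 (N + 1) = insert (N + 1) (Set.Icc 1 N) := by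
      ext x; simp only [Set.mem_Icc, Set.mem_insert_iff]; omega
    rw [hsize, hIcc]
    simpa using hold.insert (a := (0, a)) (by simp)
  · rintro c hc c' hc' h
    rcases Set.mem_insert_iff.mp hc' with rfl | hc'
    · have hca : c ≠ (0, a) := by rintro rfl; simp at h
      rw [Function.update_self, Function.update_of_ne hca]
      exact Nat.lt_succ_of_le (hf.le_size ((Set.mem_insert_iff.mp hc).resolve_left hca))
    · have hc'a : c' ≠ (0, a) := ne_of_mem_of_not_mem hc' hnew
      rcases Set.mem_insert_iff.mp hc with rfl | hc
      · exfalso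
        obtain ⟨_ | i, c'⟩ := c'
        · rw [mem_skewCells_cons_zero] at hc'
          omega
        · rw [mem_skewCells_cons_succ] at hc'
          have := getD_le_of_forall_le hl i
          omega
      · rw [Function.update_of_ne (ne_of_mem_of_not_mem hc hnew), Function.update_of_ne hc'a]
        exact hf.2.2 c hc c' hc' h

lemma numStdSkew_le_shiftFirstRow (a d r : ℕ) (l : List ℕ) :
    numStdSkew (a :: l) r ≤ numStdSkew ((a + d) :: l) (r + d) := by
  refine numStdSkew_le_of_map _ (fun f hf => hf.shiftFirstRow) fun f g hf hg h => ?_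
  refine hf.ext hg fun c hc => ?_
  obtain ⟨c', hc', rfl⟩ := (bijOn_shiftFirstRow a d r l).surjOn hc
  simpa [Set.indicator_of_mem hc'] using congrFun h c'

lemma numStdSkew_le_succ_head {a r : ℕ} {l : List ℕ} (hr : r ≤ a) (hl : ∀ x ∈ l, x ≤ a) :
    numStdSkew (a :: l) r ≤ numStdSkew ((a + 1) :: l) r := by
  refine numStdSkew_le_of_map _ (fun f hf => hf.update_succ_head hr hl) fun f g hf hg h => ?_
  refine hf.ext hg fun c hc => ?_
  have hca : c ≠ (0, a) := by
    rintro rfl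
    simp [mem_skewCells_cons_zero] at hc
  simpa [Function.update_of_ne hca] using congrFun h c

lemma numStdSkew_le_add_head {a r : ℕ} {l : List ℕ} (hr : r ≤ a) (hl : ∀ x ∈ l, x ≤ a) (e : ℕ) :
    numStdSkew (a :: l) r ≤ numStdSkew ((a + e) :: l) r := by
  induction e with
  | zero => rfl
  | succ e ih =>
    exact ih.trans <| numStdSkew_le_succ_head (by omega) fun x hx => (hl x hx).trans (by omega)

lemma numStdSkew_cons_le {a a' r r' : ℕ} {l : List ℕ} (hr : r ≤ a) (hrr' : r ≤ r')
    (hlen : a + r' ≤ a' + r) (hl : ∀ x ∈ l, x ≤ a) :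
    numStdSkew (a :: l) r ≤ numStdSkew (a' :: l) r' :=
  calc numStdSkew (a :: l) r
      ≤ numStdSkew ((a + (r' - r)) :: l) (r + (r' - r)) := numStdSkew_le_shiftFirstRow ..
    _ = numStdSkew ((a + (r' - r)) :: l) r' := by rw [Nat.add_sub_cancel' hrr']
    _ ≤ numStdSkew ((a + (r' - r) + (a' - (a + (r' - r)))) :: l) r' :=
      numStdSkew_le_add_head (by omega) (fun x hx => (hl x hx).trans (by omega)) _
    _ = numStdSkew (a' :: l) r' := by congr 2; omega

lemma numStdSkew_headI_cons_tail (l : List ℕ) (r : ℕ) :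
    numStdSkew (l.headI :: l.tail) r = numStdSkew l r := by
  cases l with
  | nil =>
    have : skewCells [0] r = skewCells [] r := by ext ⟨_ | i, c⟩ <;> simp [skewCells]
    simp [numStdSkew, IsStdSkew, this]
  | cons a l => rfl

theorem stmt_10_general (n j m k t : ℕ) (μ : List ℕ)
    (hsort : List.Pairwise (· ≥ ·) μ)
    (hhead : μ.headI = j - m - 1 + t) (hmk : m ≤ k) (hjn : j ≤ n)
    (hkm : k ≤ m + (n - j)) :
    numStdSkew μ (j - m - 1) ≤ numStdSkew ((μ.headI + (n - j)) :: μ.tail) (n - k - 1) := by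
  have htail : ∀ x ∈ μ.tail, x ≤ μ.headI := by
    cases μ with
    | nil => simp
    | cons a l => exact (List.pairwise_cons.mp hsort).1
  rw [← numStdSkew_headI_cons_tail μ]
  exact numStdSkew_cons_le (by omega) (by omega) (by omega) htail

/-- Let `μ ⊇ (j−m−1)` be a partition of `j−1` with first part `μ₁ = j−m−1+t` for some
`0 ≤ t ≤ m`, and let `n ≥ j`, `k ≥ m` with `k − (n−j) ≤ m`. Let `μ'` be obtained from `μ`
by lengthening the first row to `μ₁ + (n−j)` (so `μ'` is a partition of `n−1` with first
part `≥ n−k−1`). Then the number of standard skew tableaux of shape `μ/(j−m−1)` is at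
most the number of standard skew tableaux of shape `μ'/(n−k−1)`. -/
theorem stmt_10 (n j m k t : ℕ) (μ : List ℕ)
    (hsort : List.Pairwise (· ≥ ·) μ) (hpos : ∀ x ∈ μ, 0 < x) (hsum : μ.sum = j - 1)
    (hhead : μ.headI = j - m - 1 + t) (ht : t ≤ m) (hmk : m ≤ k) (hjn : j ≤ n)
    (hkm : k ≤ m + (n - j)) :
    numStdSkew μ (j - m - 1) ≤ numStdSkew ((μ.headI + (n - j)) :: μ.tail) (n - k - 1) :=
  stmt_10_general n j m k t μ hsort hhead hmk hjn hkm
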